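/- Let G be a non-trivial finitely generated group and let A be a finitely generated group that is invariably generated but not finitely invariably generated. Then the regular wreath product G ≀ (A × ℤ) is finitely generated and invariably generated but not finitely invariably generated. Moreover, if A contains an element of infinite order, then G ≀ A is finitely generated and invariably generated but not finitely invariably generated. -/

import Mathlib

/-! A group is invariably generated iff its only subgroup meeting every conjugacy class is the
whole group. Let `C ≤ G ≀ H` be such a subgroup, where `H` is invariably generated and `t ∈ H` has
infinite order. Then `C` maps onto `H`, and after conjugating we may assume `t ∈ C`. Conjugating
by elements of `C` shows that `coordSubgroup C 1` (the `g` with `g^{(1)} ∈ C`) meets every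
conjugacy class of `G` and equals `coordSubgroup C (t ^ m)` for all `m`. For `g ∈ G`, a large
power of a conjugate of `g^{(1)} t` lying in `C`, divided by the same power of `t`, is an element
of `C` in the base taking the value `g` at some `t ^ m`. So `coordSubgroup C 1` is normal, hence
all of `G`; then `C` contains every coordinate subgroup, so the base, so everything.

Since `G ≀ H` surjects onto `H` and quotients of finitely invariably generated groups are
finitely invariably generated, `G ≀ H` is not finitely invariably generated when `H` is not. -/

open Function SemidirectProduct

/-- A subset `S` invariably generates `K` if replacing each element of `S` by an
arbitrary conjugate always yields a generating set of `K`. -/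
def InvariablyGenerates (K : Type*) [Group K] (S : Set K) : Prop :=
  ∀ a : K → K, Subgroup.closure ((fun s => (a s)⁻¹ * s * a s) '' S) = ⊤

/-- `K` is invariably generated if `K` invariably generates itself. -/
def IsIG (K : Type*) [Group K] : Prop :=
  InvariablyGenerates K Set.univ

/-- `K` is finitely invariably generated if some finite subset invariably generates it. -/
def IsFIG (K : Type*) [Group K] : Prop :=
  ∃ S : Set K, S.Finite ∧ InvariablyGenerates K S

/-- The base of the wreath product `G ≀_X H`: the restricted direct product
`⨁_{x ∈ X} G`, realized as the finitely supported functions `X → G`. -/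
def WreathBase (G X : Type*) [Group G] : Subgroup (X → G) where
  carrier := {f | (mulSupport f).Finite}
  one_mem' := by simp
  mul_mem' {f g} hf hg := (Set.Finite.union hf hg).subset (mulSupport_mul f g)
  inv_mem' {f} hf := by simpa using hf

lemma mem_wreathBase {G X : Type*} [Group G] {f : X → G} :
    f ∈ WreathBase G X ↔ (mulSupport f).Finite := Iff.rfl

/-- The permutation action of `H` on the base, `(h • f) x = f (h⁻¹ • x)`, so that in the
wreath product conjugation by `h` (i.e. `h · g^{(x)} · h⁻¹`) sends the coordinate subgroup
`G_x` to `G_{h • x}`; equivalently `h⁻¹ · g^{(x)} · h = g^{(h⁻¹ • x)}`, which is the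
left-action rendering of "conjugation multiplies indices on the right". -/
def wreathAut (G H X : Type*) [Group G] [Group H] [MulAction H X] :
    H →* MulAut (WreathBase G X) where
  toFun h :=
    { toFun := fun f => ⟨fun x => (f : X → G) (h⁻¹ • x),
        mem_wreathBase.mpr (((mem_wreathBase.mp f.2).image (h • ·)).subset
          fun x hx => ⟨h⁻¹ • x, hx, by simp⟩)⟩
      invFun := fun f => ⟨fun x => (f : X → G) (h • x),
        mem_wreathBase.mpr (((mem_wreathBase.mp f.2).image (h⁻¹ • ·)).subset
          fun x hx => ⟨h • x, hx, by simp⟩)⟩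
      left_inv := fun f => Subtype.ext (funext fun x => by simp)
      right_inv := fun f => Subtype.ext (funext fun x => by simp)
      map_mul' := fun f g => Subtype.ext (funext fun x => by simp) }
  map_one' := by
    ext f x
    simp
  map_mul' h₁ h₂ := by
    ext f x
    simp [mul_smul]

/-- The restricted wreath product `G ≀_X H`. -/
abbrev WreathProduct (G H X : Type*) [Group G] [Group H] [MulAction H X] :=
  WreathBase G X ⋊[wreathAut G H X] H

open scoped Classical in
/-- `g^{(y)}`: the element of the base which is `g` in coordinate `y` and trivial elsewhere. -/
noncomputable def WreathBase.single {G : Type*} (X : Type*) [Group G] (y : X) :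
    G →* WreathBase G X where
  toFun g := ⟨fun x => if x = y then g else 1,
    mem_wreathBase.mpr ((Set.finite_singleton y).subset fun x hx => by
      by_contra hxy
      exact hx (if_neg hxy))⟩
  map_one' := Subtype.ext (funext fun x => by simp)
  map_mul' g₁ g₂ := Subtype.ext (funext fun x => by by_cases h : x = y <;> simp [h])

/-- The embedding of `G` onto the coordinate subgroup `G_y` of the wreath product. -/
noncomputable def coordHom (G H : Type*) {X : Type*} [Group G] [Group H] [MulAction H X]
    (y : X) : G →* WreathProduct G H X :=
  SemidirectProduct.inl.comp (WreathBase.single X y)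

/-- `H_X` is of torsion-type if there is `y ∈ X` such that for every `x` in the `H`-orbit
of `y` and every `k ∈ H`, the `⟨k⟩`-orbit of `x` is finite. -/
def IsTorsionType (H X : Type*) [Group H] [MulAction H X] : Prop :=
  ∃ y : X, ∀ x ∈ MulAction.orbit H y, ∀ k : H, (Set.range fun n : ℤ => k ^ n • x).Finite

/-- A `Γ_z`-set: a set of base elements containing, for every `g ∈ G`, an element whose
coordinate at `z` is `g`. -/
def IsGammaSet {G X : Type*} [Group G] (z : X) (Γ : Set (WreathBase G X)) : Prop :=
  ∀ g : G, ∃ f ∈ Γ, (f : X → G) z = g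

/-- The action of `H` on the base `⨁_{h ∈ H} G` of the regular wreath product `G ≀ H`,
given by right multiplication on the index set: `(φ h f) x = f (x * h)`, so that
`h⁻¹ · g^{(x)} · h = g^{(x · h)}`. -/
def regularWreathAut (G H : Type*) [Group G] [Group H] : H →* MulAut (WreathBase G H) where
  toFun h :=
    { toFun := fun f => ⟨fun x => (f : H → G) (x * h),
        mem_wreathBase.mpr (((mem_wreathBase.mp f.2).image (· * h⁻¹)).subset
          fun x hx => ⟨x * h, hx, by simp⟩)⟩
      invFun := fun f => ⟨fun x => (f : H → G) (x * h⁻¹),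
        mem_wreathBase.mpr (((mem_wreathBase.mp f.2).image (· * h)).subset
          fun x hx => ⟨x * h⁻¹, hx, by simp⟩)⟩
      left_inv := fun f => Subtype.ext (funext fun x => by simp)
      right_inv := fun f => Subtype.ext (funext fun x => by simp)
      map_mul' := fun f g => Subtype.ext (funext fun x => by simp) }
  map_one' := by
    ext f x
    simp
  map_mul' h₁ h₂ := by
    ext f x
    simp [mul_assoc]

/-- The regular wreath product `G ≀ H`: the base is `⨁_{h ∈ H} G` and `H` acts by
permuting coordinates via right multiplication on the index set `H`. -/
abbrev RegularWreath (G H : Type*) [Group G] [Group H] :=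
  WreathBase G H ⋊[regularWreathAut G H] H

namespace Subgroup

variable {K Q : Type*} [Group K] [Group Q]

def MeetsAllConjClasses (C : Subgroup K) : Prop :=
  ∀ k : K, ∃ u : K, u * k * u⁻¹ ∈ C

theorem MeetsAllConjClasses.map {C : Subgroup K} (hC : C.MeetsAllConjClasses) {f : K →* Q}
    (hf : Surjective f) : (C.map f).MeetsAllConjClasses := by
  intro q
  obtain ⟨k, rfl⟩ := hf q
  obtain ⟨u, hu⟩ := hC k
  exact ⟨f u, by simpa using mem_map_of_mem f hu⟩

theorem MeetsAllConjClasses.comap_conj {C : Subgroup K} (hC : C.MeetsAllConjClasses) (u : K) :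
    (C.comap (MulAut.conj u).toMonoidHom).MeetsAllConjClasses := by
  intro k
  obtain ⟨v, hv⟩ := hC k
  exact ⟨u⁻¹ * v, by simpa [mul_assoc] using hv⟩

theorem Normal.eq_top_of_meetsAllConjClasses {C : Subgroup K} (hN : C.Normal)
    (hC : C.MeetsAllConjClasses) : C = ⊤ := by
  refine eq_top_iff.mpr fun k _ => ?_
  obtain ⟨u, hu⟩ := hC k
  simpa [mul_assoc] using hN.conj_mem _ hu u⁻¹

end Subgroup

open Subgroup

theorem isIG_iff {K : Type*} [Group K] :
    IsIG K ↔ ∀ C : Subgroup K, C.MeetsAllConjClasses → C = ⊤ := by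
  refine ⟨fun hK C hC => ?_, fun hK a => hK _ fun k => ⟨(a k)⁻¹, ?_⟩⟩
  · choose u hu using hC
    refine eq_top_iff.mpr ((hK fun k => (u k)⁻¹) ▸ (closure_le _).mpr ?_)
    rintro _ ⟨k, -, rfl⟩
    simpa using hu k
  · exact subset_closure ⟨k, Set.mem_univ k, by simp⟩

theorem InvariablyGenerates.image {K Q : Type*} [Group K] [Group Q] {S : Set K}
    (hS : InvariablyGenerates K S) {f : K →* Q} (hf : Surjective f) :
    InvariablyGenerates Q (f '' S) := by
  intro b
  have himage : (fun q => (b q)⁻¹ * q * b q) '' (f '' S)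
      = f '' ((fun s => (surjInv hf (b (f s)))⁻¹ * s * surjInv hf (b (f s))) '' S) := by
    simp only [Set.image_image, map_mul, map_inv, surjInv_eq hf]
  rw [himage, ← MonoidHom.map_closure, hS, map_top_of_surjective f hf]

theorem IsFIG.of_surjective {K Q : Type*} [Group K] [Group Q] (hK : IsFIG K) {f : K →* Q}
    (hf : Surjective f) : IsFIG Q := by
  obtain ⟨S, hfin, hS⟩ := hK
  exact ⟨f '' S, hfin.image f, hS.image hf⟩

theorem isIG_of_commGroup (K : Type*) [CommGroup K] : IsIG K :=
  isIG_iff.mpr fun C hC => eq_top_iff.mpr fun k _ => by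
    obtain ⟨u, hu⟩ := hC k
    simpa using hu

theorem IsIG.prod {A B : Type*} [Group A] [Group B] (hA : IsIG A) (hB : IsIG B) :
    IsIG (A × B) := by
  refine isIG_iff.mpr fun C hC => ?_
  have hCA : C.comap (MonoidHom.inl A B) = ⊤ := isIG_iff.mp hA _ fun a => by
    obtain ⟨u, hu⟩ := hC (a, 1)
    refine ⟨u.1, show MonoidHom.inl A B _ ∈ C from ?_⟩
    convert hu using 1
    ext <;> simp
  have hCB : C.comap (MonoidHom.inr A B) = ⊤ := isIG_iff.mp hB _ fun b => by
    obtain ⟨u, hu⟩ := hC (1, b)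
    refine ⟨u.2, show MonoidHom.inr A B _ ∈ C from ?_⟩
    convert hu using 1
    ext <;> simp
  refine eq_top_iff.mpr fun ⟨a, b⟩ _ => ?_
  rw [← Prod.fst_mul_snd (a, b)]
  exact mul_mem (hCA.ge (mem_top a)) (hCB.ge (mem_top b))

theorem SemidirectProduct.inl_left_of_right_eq_one {N K : Type*} [Group N] [Group K]
    {φ : K →* MulAut N} {x : N ⋊[φ] K} (hx : x.right = 1) : inl x.left = x := by
  simpa [hx] using inl_left_mul_inr_right x

theorem SemidirectProduct.right_pow {N K : Type*} [Group N] [Group K]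
    {φ : K →* MulAut N} (x : N ⋊[φ] K) (n : ℕ) : (x ^ n).right = x.right ^ n :=
  map_pow rightHom x n

theorem SemidirectProduct.inl_mul_inr_left {N K : Type*} [Group N] [Group K]
    {φ : K →* MulAut N} (n : N) (k : K) : (inl n * inr k : N ⋊[φ] K).left = n := by
  simp

namespace WreathBase

variable {G X : Type*} [Group G]

open scoped Classical in
theorem single_apply (y : X) (g : G) (x : X) :
    (WreathBase.single X y g : X → G) x = if x = y then g else 1 := rfl

theorem eq_top_of_forall_single_mem {D : Subgroup (WreathBase G X)}
    (hD : ∀ y g, WreathBase.single X y g ∈ D) : D = ⊤ := by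
  suffices h : ∀ (s : Finset X) (f : WreathBase G X), mulSupport (f : X → G) ⊆ s → f ∈ D from
    eq_top_iff.mpr fun f _ => h f.2.toFinset f f.2.coe_toFinset.ge
  classical
  intro s
  induction s using Finset.induction_on with
  | empty =>
    intro f hf
    have : f = 1 := Subtype.ext (mulSupport_eq_empty_iff.mp (by simpa using hf))
    exact this ▸ D.one_mem
  | insert y s _ ih =>
    intro f hf
    rw [← mul_inv_cancel_left (WreathBase.single X y ((f : X → G) y)) f]
    refine D.mul_mem (hD _ _) (ih _ fun x hx => ?_)
    have hxy : x ≠ y := by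
      rintro rfl
      simp [single_apply] at hx
    have hfx : (f : X → G) x ≠ 1 := by simpa [single_apply, hxy] using hx
    simpa [hxy] using hf hfx

theorem exists_forall_le_abs_apply_zpow_eq_one {H : Type*} [Group H] {t : H}
    (ht : ¬IsOfFinOrder t) (a : WreathBase G H) :
    ∃ J : ℕ, ∀ m : ℤ, (J : ℤ) ≤ |m| → (a : H → G) (t ^ m) = 1 := by
  have hfin : ((t ^ · : ℤ → H) ⁻¹' mulSupport (a : H → G)).Finite :=
    a.2.preimage (injective_zpow_iff_not_isOfFinOrder.mpr ht).injOn
  obtain ⟨M, hM⟩ := (hfin.image Int.natAbs).bddAbove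
  refine ⟨M + 1, fun m hm => ?_⟩
  by_contra hne
  have : m.natAbs ≤ M := hM ⟨m, hne, rfl⟩
  rw [Int.abs_eq_natAbs] at hm
  omega

end WreathBase

namespace RegularWreath

variable {G H : Type*} [Group G] [Group H]

theorem regularWreathAut_apply (h : H) (f : WreathBase G H) (x : H) :
    (regularWreathAut G H h f : H → G) x = (f : H → G) (x * h) := rfl

theorem conj_inl_single (w : RegularWreath G H) (y : H) (g : G) :
    w * inl (WreathBase.single H y g) * w⁻¹ = inl (WreathBase.single H (y * w.right⁻¹)
      (MulAut.conj ((w.left : H → G) (y * w.right⁻¹)) g)) := by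
  ext x
  · by_cases hx : x = y * w.right⁻¹
    · subst hx
      simp [mul_left, inv_left, WreathBase.single_apply, regularWreathAut_apply]
    · simp [mul_left, inv_left, WreathBase.single_apply, regularWreathAut_apply, hx,
        ← eq_mul_inv_iff_mul_eq]
  · simp

theorem inl_mem_of_forall_single_mem {C : Subgroup (RegularWreath G H)}
    (hC : ∀ y g, inl (WreathBase.single H y g) ∈ C) (f : WreathBase G H) : inl f ∈ C := by
  have : C.comap inl = ⊤ := WreathBase.eq_top_of_forall_single_mem hC
  exact this.ge (mem_top f)

theorem left_pow_inl_single_mul_inr_apply {t : H} (ht : ¬IsOfFinOrder t) (g : G) (n j : ℕ) :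
    (((inl (WreathBase.single H 1 g) * inr t : RegularWreath G H) ^ n).left : H → G)
      (t ^ (-(j : ℤ))) = if j < n then g else 1 := by
  induction n with
  | zero => simp
  | succ n ih =>
    have hjn : t ^ (-(j : ℤ)) * t ^ n = 1 ↔ j = n := by
      rw [← zpow_natCast, ← zpow_add,
        (injective_zpow_iff_not_isOfFinOrder.mpr ht).eq_iff' (zpow_zero t)]
      omega
    rw [pow_succ, mul_left, right_pow, Subgroup.coe_mul, Pi.mul_apply, ih,
      inl_mul_inr_left, regularWreathAut_apply, WreathBase.single_apply, mul_right, right_inl,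
      right_inr, one_mul, hjn]
    split_ifs <;> first | omega | simp

variable {C : Subgroup (RegularWreath G H)}

variable (C) in
noncomputable def coordSubgroup (y : H) : Subgroup G :=
  C.comap (inl.comp (WreathBase.single H y))

theorem mem_coordSubgroup {y : H} {g : G} :
    g ∈ coordSubgroup C y ↔ inl (WreathBase.single H y g) ∈ C := Iff.rfl

theorem conj_mem_coordSubgroup {w : RegularWreath G H} (hw : w ∈ C) {y : H} {g : G}
    (hg : g ∈ coordSubgroup C y) :
    MulAut.conj ((w.left : H → G) (y * w.right⁻¹)) g ∈ coordSubgroup C (y * w.right⁻¹) := by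
  rw [mem_coordSubgroup, ← conj_inl_single]
  exact C.mul_mem (C.mul_mem hw hg) (C.inv_mem hw)

theorem coordSubgroup_le_mul_inv {h : H} (hh : inr h ∈ C) (y : H) :
    coordSubgroup C y ≤ coordSubgroup C (y * h⁻¹) :=
  fun _ hg => by simpa using conj_mem_coordSubgroup hh hg

theorem coordSubgroup_mul_zpow {t : H} (ht : inr t ∈ C) (y : H) (n : ℤ) :
    coordSubgroup C (y * t ^ n) = coordSubgroup C y := by
  have hn : inr (t ^ n) ∈ C := by simpa using C.zpow_mem ht n
  refine le_antisymm ?_ ?_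
  · simpa using coordSubgroup_le_mul_inv hn (y * t ^ n)
  · simpa using coordSubgroup_le_mul_inv (h := (t ^ n)⁻¹) (by simpa using C.inv_mem hn) y

theorem conj_mem_coordSubgroup_of_inl_mem {F : WreathBase G H} (hF : inl F ∈ C) {y : H} {g : G}
    (hg : g ∈ coordSubgroup C y) : MulAut.conj ((F : H → G) y) g ∈ coordSubgroup C y := by
  simpa using conj_mem_coordSubgroup hF hg

theorem exists_mem_right_eq (hC : C.map rightHom = ⊤) (h : H) : ∃ w ∈ C, w.right = h :=
  (hC ▸ mem_top h : h ∈ C.map rightHom)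

theorem coordSubgroup_eq_top_of_eq_top (hC : C.map rightHom = ⊤) {y : H}
    (hy : coordSubgroup C y = ⊤) (z : H) : coordSubgroup C z = ⊤ := by
  obtain ⟨w, hw, hwz⟩ := exists_mem_right_eq hC (z⁻¹ * y)
  refine eq_top_iff.mpr fun g _ => ?_
  simpa [hwz, mul_assoc] using conj_mem_coordSubgroup hw
    (hy.ge (mem_top ((MulAut.conj ((w.left : H → G) (y * w.right⁻¹)))⁻¹ g)))

theorem eq_top_of_coordSubgroup_eq_top (hC : C.map rightHom = ⊤) {y : H}
    (hy : coordSubgroup C y = ⊤) : C = ⊤ := by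
  have hinl := inl_mem_of_forall_single_mem fun z g =>
    (coordSubgroup_eq_top_of_eq_top hC hy z).ge (mem_top g)
  refine eq_top_iff.mpr fun x _ => ?_
  obtain ⟨w, hw, hwx⟩ := exists_mem_right_eq hC x.right
  rw [← inv_mul_cancel_right x w, ← inl_left_of_right_eq_one (x := x * w⁻¹) (by simp [hwx])]
  exact C.mul_mem (hinl _) hw

theorem fg (hG : Group.FG G) (hH : Group.FG H) : Group.FG (RegularWreath G H) := by
  obtain ⟨SG, hSG, hSGfin⟩ := Group.fg_iff.mp hG
  obtain ⟨SH, hSH, hSHfin⟩ := Group.fg_iff.mp hH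
  set f : G →* RegularWreath G H := inl.comp (WreathBase.single H 1)
  refine Group.fg_iff.mpr ⟨f '' SG ∪ inr '' SH, ?_, (hSGfin.image f).union (hSHfin.image inr)⟩
  rw [Subgroup.closure_union, ← MonoidHom.map_closure, ← MonoidHom.map_closure, hSG, hSH,
    ← MonoidHom.range_eq_map, ← MonoidHom.range_eq_map]
  have hright : (f.range ⊔ inr.range).map rightHom = ⊤ :=
    eq_top_iff.mpr fun h _ => ⟨inr h, mem_sup_right ⟨h, rfl⟩, rightHom_inr h⟩
  exact eq_top_of_coordSubgroup_eq_top hright (y := 1)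
    (eq_top_iff.mpr fun g _ => mem_sup_left ⟨g, rfl⟩)

theorem coordSubgroup_one_meetsAllConjClasses (hC : C.MeetsAllConjClasses)
    (hright : C.map rightHom = ⊤) : (coordSubgroup C 1).MeetsAllConjClasses := by
  intro g
  obtain ⟨u, hu⟩ := hC (inl (WreathBase.single H 1 g))
  rw [conj_inl_single] at hu
  obtain ⟨w, hw, hwu⟩ := exists_mem_right_eq hright u.right⁻¹
  have hg := conj_mem_coordSubgroup hw hu
  rw [hwu, one_mul, mul_inv_cancel, ← MulAut.mul_apply, ← map_mul] at hg
  exact ⟨_, hg⟩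

theorem exists_inl_mem_apply_zpow_eq (hC : C.MeetsAllConjClasses) (hright : C.map rightHom = ⊤)
    {t : H} (ht : ¬IsOfFinOrder t) (htC : inr t ∈ C) (g : G) :
    ∃ (F : WreathBase G H) (m : ℤ), inl F ∈ C ∧ (F : H → G) (t ^ m) = g := by
  set x : RegularWreath G H := inl (WreathBase.single H 1 g) * inr t
  obtain ⟨u, hu⟩ := hC x
  obtain ⟨c, hc, hcu⟩ := exists_mem_right_eq hright u.right
  set a := (c⁻¹ * u).left
  have ha : inl a = c⁻¹ * u := inl_left_of_right_eq_one (by simp [hcu])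
  have hconj : inl a * x * (inl a)⁻¹ ∈ C := by
    rw [ha]
    simpa [mul_assoc] using C.mul_mem (C.mul_mem (C.inv_mem hc) hu) hc
  -- `(x ^ n).left` is `g` at `t⁰, t⁻¹, …, t^{-2J}`, while `a` is trivial at both
  -- `t^{-J}` and `t^{-J} * t ^ n = t^{J+1}`, so `F` below takes the value `g` at `t^{-J}`.
  obtain ⟨J, hJ⟩ := WreathBase.exists_forall_le_abs_apply_zpow_eq_one ht a
  set n := 2 * J + 1 with hn
  set m := (x ^ n).left
  set F := a * m * regularWreathAut G H (t ^ n) a⁻¹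
  have hF : inl F = (inl a * x * (inl a)⁻¹) ^ n * (inr t ^ n)⁻¹ := by
    have hx : inl m * inr (t ^ n) = x ^ n := by
      simpa [x, right_pow] using inl_left_mul_inr_right (x ^ n)
    rw [conj_pow, ← hx, ← map_pow, map_mul, map_mul, inl_aut]
    simp only [map_inv, mul_assoc]
  refine ⟨F, -J, hF ▸ C.mul_mem (C.pow_mem hconj n) (C.inv_mem (C.pow_mem htC n)), ?_⟩
  have ha₁ : (a : H → G) (t ^ (-(J : ℤ))) = 1 := hJ _ (by simp)
  have ha₂ : (a : H → G) (t ^ (-(J : ℤ)) * t ^ n) = 1 := by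
    rw [← zpow_natCast, ← zpow_add]
    exact hJ _ (by rw [abs_of_nonneg (by omega)]; omega)
  have hm : (m : H → G) (t ^ (-(J : ℤ))) = g := by
    rw [left_pow_inl_single_mul_inr_apply ht, if_pos (by omega)]
  change (a : H → G) _ * (m : H → G) _ * ((a : H → G) (t ^ (-(J : ℤ)) * t ^ n))⁻¹ = g
  rw [ha₁, hm, ha₂, one_mul, inv_one, mul_one]

theorem coordSubgroup_one_normal (hC : C.MeetsAllConjClasses) (hright : C.map rightHom = ⊤)
    {t : H} (ht : ¬IsOfFinOrder t) (htC : inr t ∈ C) : (coordSubgroup C 1).Normal := by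
  refine ⟨fun v hv g => ?_⟩
  obtain ⟨F, m, hF, hFg⟩ := exists_inl_mem_apply_zpow_eq hC hright ht htC g
  have hV : coordSubgroup C (t ^ m) = coordSubgroup C 1 := by
    simpa using coordSubgroup_mul_zpow htC 1 m
  rw [← hV] at hv ⊢
  simpa [hFg] using conj_mem_coordSubgroup_of_inl_mem hF hv

theorem eq_top_of_meetsAllConjClasses_of_inr_mem (hH : IsIG H) (hC : C.MeetsAllConjClasses)
    {t : H} (ht : ¬IsOfFinOrder t) (htC : inr t ∈ C) : C = ⊤ := by
  have hright : C.map rightHom = ⊤ := isIG_iff.mp hH _ (hC.map rightHom_surjective)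
  exact eq_top_of_coordSubgroup_eq_top hright
    ((coordSubgroup_one_normal hC hright ht htC).eq_top_of_meetsAllConjClasses
      (coordSubgroup_one_meetsAllConjClasses hC hright))

theorem isIG_of_not_isOfFinOrder (hH : IsIG H) {t : H} (ht : ¬IsOfFinOrder t) :
    IsIG (RegularWreath G H) := by
  refine isIG_iff.mpr fun C hC => ?_
  obtain ⟨u, hu⟩ := hC (inr t)
  have hconj : C.comap (MulAut.conj u).toMonoidHom = ⊤ :=
    eq_top_of_meetsAllConjClasses_of_inr_mem hH (hC.comap_conj u) ht hu
  refine eq_top_iff.mpr fun x _ => ?_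
  simpa [mul_assoc] using hconj.ge (mem_top (u⁻¹ * x * u))

end RegularWreath

theorem stmt_7_general (G A : Type*) [Group G] [Group A]
    (hG : Group.FG G) (hA : Group.FG A) (hA₁ : IsIG A) (hA₂ : ¬ IsFIG A) :
    (Group.FG (RegularWreath G (A × Multiplicative ℤ)) ∧
        IsIG (RegularWreath G (A × Multiplicative ℤ)) ∧
        ¬ IsFIG (RegularWreath G (A × Multiplicative ℤ))) ∧
      ((∃ a : A, ¬ IsOfFinOrder a) →
        Group.FG (RegularWreath G A) ∧ IsIG (RegularWreath G A) ∧
          ¬ IsFIG (RegularWreath G A)) := by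
  have hAZ : ¬IsOfFinOrder ((1, Multiplicative.ofAdd 1) : A × Multiplicative ℤ) := fun h => by
    simpa [isOfFinOrder_iff_eq_one] using h.snd
  refine ⟨⟨RegularWreath.fg hG inferInstance, ?_, fun h => hA₂ ?_⟩, ?_⟩
  · exact RegularWreath.isIG_of_not_isOfFinOrder (hA₁.prod (isIG_of_commGroup _)) hAZ
  · exact h.of_surjective (f := (MonoidHom.fst A _).comp rightHom)
      (Prod.fst_surjective.comp rightHom_surjective)
  · rintro ⟨a, ha⟩
    exact ⟨RegularWreath.fg hG hA, RegularWreath.isIG_of_not_isOfFinOrder hA₁ ha,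
      fun h => hA₂ (h.of_surjective rightHom_surjective)⟩

theorem stmt_7 (G A : Type*) [Group G] [Nontrivial G] [Group A]
    (hG : Group.FG G) (hA : Group.FG A) (hA₁ : IsIG A) (hA₂ : ¬ IsFIG A) :
    (Group.FG (RegularWreath G (A × Multiplicative ℤ)) ∧
        IsIG (RegularWreath G (A × Multiplicative ℤ)) ∧
        ¬ IsFIG (RegularWreath G (A × Multiplicative ℤ))) ∧
      ((∃ a : A, ¬ IsOfFinOrder a) →
        Group.FG (RegularWreath G A) ∧ IsIG (RegularWreath G A) ∧
          ¬ IsFIG (RegularWreath G A)) :=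
  stmt_7_general G A hG hA hA₁ hA₂
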